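/- In a median graph G with a fixed basepoint v₀, let u be a vertex, L a POF outgoing from u, Q the induced hypercube with basis u and Θ-classes L, and u⁺ the anti-basis of Q. Then a vertex v ≠ u⁺ satisfies u ∈ I(v₀,v) and L_{u,v} = L if and only if (i) u⁺ ∈ I(v₀,v) and (ii) for each Θ-class E_j ∈ L_{u⁺,v}, the set L ∪ {E_j} is not a POF. -/

import Mathlib

/-!
In a median graph every Θ-class `C` cuts `G` into two halfspaces, `W_{ab}` and `W_{ba}` for any
edge `ab ∈ C` (Djoković–Winkler). Hence `d(x, y) = |σ_{x,y}|`, signatures add up modulo 2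
(`σ_{x,z} = σ_{x,y} ∆ σ_{y,z}`), and `z ∈ I(x, y)` iff `σ_{x,z} ⊆ σ_{x,y}`.

For the cube `Q` with basis `u` and anti-basis `u⁺`, every class of `L` has an edge of `Q` at
every vertex of `Q`; orienting those edges at `u` and `u⁺` gives `σ_{u,u⁺} = L` and
`u ∈ I(v₀, u⁺)`, so `u⁺ ∈ I(v₀, v)` iff `u ∈ I(v₀, v)` and `L ⊆ σ_{u,v}`. A class `C ∉ L` does
not separate vertices of `Q`, so it lies in `σ_{u,v}` iff it lies in `σ_{u⁺,v}`; if moreover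
`C` is orthogonal to all of `L`, its edges slide across the squares of `Q`, so `C` has an edge at
`u` iff it has one at `u⁺`. Since two classes of `L_{u,v}` are always orthogonal, `L_{u,v} = L`
then says exactly that no class of `L_{u⁺,v}` extends `L` to a POF.
-/

namespace MedianPaper

variable {V : Type*}

/-- The metric interval `I(u,v)`: vertices on shortest `(u,v)`-paths. -/
def interval (G : SimpleGraph V) (u v : V) : Set V :=
  {w | G.dist u w + G.dist w v = G.dist u v}

/-- A median graph: a connected graph in which every triple of vertices
has a unique median. -/
def MedianGraph (G : SimpleGraph V) : Prop :=
  G.Connected ∧ ∀ x y z : V, ∃! m : V,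
    m ∈ interval G x y ∧ m ∈ interval G y z ∧ m ∈ interval G z x

/-- `u v x y` span a 4-cycle `u-v-y-x-u`, with opposite edge pairs
`(uv, xy)` and `(ux, vy)`. -/
def IsSquare (G : SimpleGraph V) (u v x y : V) : Prop :=
  G.Adj u v ∧ G.Adj x y ∧ G.Adj u x ∧ G.Adj v y ∧ u ≠ y ∧ v ≠ x

/-- Two edges are in relation Θ₀ if they are opposite edges of a common 4-cycle. -/
def Theta0 (G : SimpleGraph V) (e f : Sym2 V) : Prop :=
  ∃ u v x y : V, IsSquare G u v x y ∧ e = s(u, v) ∧ f = s(x, y)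

/-- Θ : the reflexive-transitive closure of Θ₀ on the edges of `G`. -/
def Theta (G : SimpleGraph V) (e f : Sym2 V) : Prop :=
  e ∈ G.edgeSet ∧ f ∈ G.edgeSet ∧ Relation.ReflTransGen (Theta0 G) e f

/-- The Θ-classes of `G`: equivalence classes of edges under Θ. -/
def ThetaClass (G : SimpleGraph V) (C : Set (Sym2 V)) : Prop :=
  ∃ e ∈ G.edgeSet, C = {f | Theta G e f}

/-- The edge set `C` separates `u` from `v` : they lie in different
components of `G` minus `C`. -/
def Separates (G : SimpleGraph V) (C : Set (Sym2 V)) (u v : V) : Prop :=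
  ¬ (G.deleteEdges C).Reachable u v

/-- The signature `σ_{u,v}`: Θ-classes separating `u` from `v`. -/
def signature (G : SimpleGraph V) (u v : V) : Set (Set (Sym2 V)) :=
  {C | ThetaClass G C ∧ Separates G C u v}

/-- `H`, `H'` are the two connected components (halfspaces) of `G` deprived
of the edges in `C`. -/
def IsHalfspacePair (G : SimpleGraph V) (C : Set (Sym2 V)) (H H' : Set V) : Prop :=
  H.Nonempty ∧ H'.Nonempty ∧ Disjoint H H' ∧ H ∪ H' = Set.univ ∧
  (∀ x ∈ H, ∀ y ∈ H, (G.deleteEdges C).Reachable x y) ∧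
  (∀ x ∈ H', ∀ y ∈ H', (G.deleteEdges C).Reachable x y) ∧
  (∀ x ∈ H, ∀ y ∈ H', ¬ (G.deleteEdges C).Reachable x y)

/-- The boundary of a halfspace `H` of the Θ-class `C` : vertices of `H`
incident to an edge of `C`. -/
def boundarySet (G : SimpleGraph V) (C : Set (Sym2 V)) (H : Set V) : Set V :=
  {x | x ∈ H ∧ ∃ y, G.Adj x y ∧ s(x, y) ∈ C}

/-- Orthogonality of Θ-classes: there is a common square using both. -/
def Orthogonal (G : SimpleGraph V) (C₁ C₂ : Set (Sym2 V)) : Prop :=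
  ∃ u v x y : V, IsSquare G u v x y ∧
    s(u, v) ∈ C₁ ∧ s(x, y) ∈ C₁ ∧ s(u, x) ∈ C₂ ∧ s(v, y) ∈ C₂

/-- A pairwise orthogonal family (POF) of Θ-classes. -/
def IsPOF (G : SimpleGraph V) (X : Set (Set (Sym2 V))) : Prop :=
  (∀ C ∈ X, ThetaClass G C) ∧
  ∀ C ∈ X, ∀ C' ∈ X, C ≠ C' → Orthogonal G C C'

/-- The `k`-dimensional hypercube graph, on subsets of `{1,…,k}`;
two subsets are adjacent iff their symmetric difference has one element. -/
def cubeGraph (k : ℕ) : SimpleGraph (Finset (Fin k)) where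
  Adj A B := (symmDiff A B).card = 1
  symm := by
    constructor
    intro A B h
    rwa [symmDiff_comm] at h
  loopless := by
    constructor
    intro A h
    simp [symmDiff_self] at h

/-- `S` induces a hypercube of dimension `k` in `G`. -/
def IsCubeDim (G : SimpleGraph V) (S : Set V) (k : ℕ) : Prop :=
  Nonempty ((G.induce S) ≃g cubeGraph k)

/-- `S` induces a hypercube in `G`. -/
def IsInducedCube (G : SimpleGraph V) (S : Set V) : Prop :=
  ∃ k, IsCubeDim G S k

/-- The dimension of `G` is `d`: the largest dimension of an induced hypercube. -/
def GraphDim (G : SimpleGraph V) (d : ℕ) : Prop :=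
  (∃ S : Set V, IsCubeDim G S d) ∧ ∀ (S : Set V) (k : ℕ), IsCubeDim G S k → k ≤ d

/-- The Θ-classes of the edges of the induced subgraph on `S`. -/
def cubeClasses (G : SimpleGraph V) (S : Set V) : Set (Set (Sym2 V)) :=
  {C | ThetaClass G C ∧ ∃ x ∈ S, ∃ y ∈ S, G.Adj x y ∧ s(x, y) ∈ C}

/-- With the `v₀`-orientation, `b ∈ S` is the basis of `S`: all edges of `S`
incident to `b` are outgoing from `b`. -/
def IsBasis (G : SimpleGraph V) (v₀ : V) (S : Set V) (b : V) : Prop :=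
  b ∈ S ∧ ∀ w ∈ S, G.Adj b w → G.dist v₀ b < G.dist v₀ w

/-- With the `v₀`-orientation, `b ∈ S` is the anti-basis of `S`: all edges of `S`
incident to `b` are ingoing to `b`. -/
def IsAntiBasis (G : SimpleGraph V) (v₀ : V) (S : Set V) (b : V) : Prop :=
  b ∈ S ∧ ∀ w ∈ S, G.Adj b w → G.dist v₀ w < G.dist v₀ b

/-- `ℰ⁻(v)` : the Θ-classes containing at least one edge ingoing to `v`. -/
def inClasses (G : SimpleGraph V) (v₀ v : V) : Set (Set (Sym2 V)) :=
  {C | ThetaClass G C ∧ ∃ u, G.Adj u v ∧ G.dist v₀ u < G.dist v₀ v ∧ s(u, v) ∈ C}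

/-- The ladder set `L_{u,v}`: classes of the signature `σ_{u,v}` having an
edge incident to `u`. -/
def ladder (G : SimpleGraph V) (u v : V) : Set (Set (Sym2 V)) :=
  {C | C ∈ signature G u v ∧ ∃ w, G.Adj u w ∧ s(u, w) ∈ C}

/-- A POF each of whose classes has an edge outgoing from `u`. -/
def OutgoingPOF (G : SimpleGraph V) (v₀ u : V) (L : Set (Set (Sym2 V))) : Prop :=
  IsPOF G L ∧ ∀ C ∈ L, ∃ w, G.Adj u w ∧ G.dist v₀ u < G.dist v₀ w ∧ s(u, w) ∈ C

/-- A POF each of whose classes has an edge ingoing to `u`. -/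
def IngoingPOF (G : SimpleGraph V) (v₀ u : V) (X : Set (Set (Sym2 V))) : Prop :=
  IsPOF G X ∧ ∀ C ∈ X, ∃ w, G.Adj w u ∧ G.dist v₀ w < G.dist v₀ u ∧ s(w, u) ∈ C

/-- `m` is a median of the triple `x, y, z`. -/
def IsMedian (G : SimpleGraph V) (x y z m : V) : Prop :=
  m ∈ interval G x y ∧ m ∈ interval G y z ∧ m ∈ interval G z x

/-- `b` is the milestone following `a` on the way to `v`: `b` is the anti-basis of
the induced hypercube with basis `a` whose Θ-classes are the ladder set `L_{a,v}`. -/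
def NextMilestone (G : SimpleGraph V) (v₀ v a b : V) : Prop :=
  ∃ S : Set V, IsInducedCube G S ∧ IsBasis G v₀ S a ∧ IsAntiBasis G v₀ S b ∧
    cubeClasses G S = ladder G a v

/-- The milestone set `Π(u,v)`: vertices obtained from `u` by iterating the
next-milestone step towards `v`. -/
def MilestoneSet (G : SimpleGraph V) (v₀ u v : V) : Set V :=
  {p | Relation.ReflTransGen (fun a b => NextMilestone G v₀ v a b) u p}

/-- The penultimate milestone `π̄(u,v)`: the milestone of `Π(u,v)` other than `v`
closest to `v`, i.e. whose next milestone is `v` itself. -/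
def IsPenultimate (G : SimpleGraph V) (v₀ u v p : V) : Prop :=
  p ∈ MilestoneSet G v₀ u v ∧ p ≠ v ∧ NextMilestone G v₀ v p v

/-- A convex set of vertices. -/
def ConvexSet (G : SimpleGraph V) (H : Set V) : Prop :=
  ∀ u ∈ H, ∀ v ∈ H, interval G u v ⊆ H

/-- A gated set of vertices: each vertex has a gate in `H`. -/
def GatedSet (G : SimpleGraph V) (H : Set V) : Prop :=
  ∀ x : V, ∃ g ∈ H, ∀ h ∈ H, g ∈ interval G x h


open SimpleGraph

variable {G : SimpleGraph V} {a b u v w x y z : V}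

section Metric

lemma MedianGraph.isMedian_unique (hmed : MedianGraph G) {m m' : V} (h : IsMedian G x y z m)
    (h' : IsMedian G x y z m') : m = m' :=
  (hmed.2 x y z).unique h h'

lemma MedianGraph.dist_ne_of_adj (hmed : MedianGraph G) (hab : G.Adj a b) (w : V) :
    G.dist w a ≠ G.dist w b := by
  intro h
  obtain ⟨m, ⟨hwa, hab', hbw⟩, -⟩ := hmed.2 w a b
  simp only [interval, Set.mem_ofPred_eq, dist_eq_one_iff_adj.2 hab] at hwa hab' hbw
  have hm : m = a ∨ m = b := by
    rcases Nat.eq_zero_or_pos (G.dist a m) with h0 | h0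
    · exact .inl (hmed.1.dist_eq_zero_iff.1 h0).symm
    · exact .inr (hmed.1.dist_eq_zero_iff.1 (by omega))
  have hba : G.dist b a = 1 := dist_eq_one_iff_adj.2 hab.symm
  rcases hm with rfl | rfl
  · have := G.dist_comm (u := w) (v := m)
    have := G.dist_comm (u := w) (v := b)
    omega
  · omega

lemma MedianGraph.dist_eq_or_of_adj (hmed : MedianGraph G) (hab : G.Adj a b) (w : V) :
    G.dist w b = G.dist w a + 1 ∨ G.dist w a = G.dist w b + 1 := by
  have := hmed.dist_ne_of_adj hab w
  rcases hab.diff_dist_adj (u := w) with h | h | h <;> omega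

lemma MedianGraph.dist_eq_two (hmed : MedianGraph G) (hxa : G.Adj x a) (hxb : G.Adj x b)
    (hab : a ≠ b) : G.dist a b = 2 := by
  have htri : G.dist a b ≤ G.dist a x + G.dist x b := hmed.1.dist_triangle
  rw [dist_eq_one_iff_adj.2 hxa.symm, dist_eq_one_iff_adj.2 hxb] at htri
  have h0 : G.dist a b ≠ 0 := fun h => hab (hmed.1.dist_eq_zero_iff.1 h)
  have h1 : G.dist a b ≠ 1 := fun h =>
    hmed.dist_ne_of_adj (dist_eq_one_iff_adj.1 h) x
      (by rw [dist_eq_one_iff_adj.2 hxa, dist_eq_one_iff_adj.2 hxb])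
  omega

lemma _root_.SimpleGraph.Connected.exists_adj_dist_succ (hconn : G.Connected) (h : x ≠ y) :
    ∃ z, G.Adj x z ∧ G.dist z y + 1 = G.dist x y := by
  obtain ⟨p, hp⟩ := exists_walk_of_dist_ne_zero (hconn.pos_dist_of_ne h).ne'
  cases p with
  | nil => exact absurd rfl h
  | @cons _ z _ hxz q =>
    refine ⟨z, hxz, le_antisymm ?_ ?_⟩
    · have := dist_le q
      simp only [Walk.length_cons] at hp
      omega
    · have := hconn.dist_triangle (u := x) (v := z) (w := y)
      rw [dist_eq_one_iff_adj.2 hxz] at this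
      omega

/-- The fourth corner is the median of `a`, `b` and `w`. -/
lemma MedianGraph.exists_isSquare (hmed : MedianGraph G) (hxa : G.Adj x a) (hxb : G.Adj x b)
    (hab : a ≠ b) (ha : G.dist w a < G.dist w x) (hb : G.dist w b < G.dist w x) :
    ∃ m, IsSquare G x a b m ∧ G.dist w m + 1 = G.dist w a := by
  have hd := hmed.dist_eq_two hxa hxb hab
  have hda := hmed.dist_eq_or_of_adj hxa w
  have hdb := hmed.dist_eq_or_of_adj hxb w
  obtain ⟨m, ⟨hm1, hm2, hm3⟩, -⟩ := hmed.2 a b w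
  simp only [interval, Set.mem_ofPred_eq, hd] at hm1 hm2 hm3
  have := G.dist_comm (u := b) (v := w)
  have := G.dist_comm (u := w) (v := m)
  have := G.dist_comm (u := a) (v := w)
  have := G.dist_comm (u := a) (v := m)
  have := G.dist_comm (u := a) (v := b)
  have hma : G.dist a m ≠ 0 := by
    intro h
    obtain rfl := hmed.1.dist_eq_zero_iff.1 h
    omega
  have hmb : G.dist m b ≠ 0 := by
    intro h
    obtain rfl := hmed.1.dist_eq_zero_iff.1 h
    omega
  have ham : G.Adj a m := dist_eq_one_iff_adj.1 (by omega)
  have hmb' : G.Adj m b := dist_eq_one_iff_adj.1 (by omega)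
  refine ⟨m, ⟨hxa, hmb'.symm, hxb, ham, ?_, hab⟩, by omega⟩
  rintro rfl
  omega

end Metric

section Djokovic

/-- The Djoković–Winkler set `W_{ab}`. -/
def djokovicSet (G : SimpleGraph V) (a b : V) : Set V :=
  {w | G.dist w a < G.dist w b}

lemma mem_djokovicSet : w ∈ djokovicSet G a b ↔ G.dist w a < G.dist w b := Iff.rfl

lemma MedianGraph.djokovicSet_swap (hmed : MedianGraph G) (hab : G.Adj a b) :
    djokovicSet G b a = (djokovicSet G a b)ᶜ := by
  ext w
  have := hmed.dist_ne_of_adj hab w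
  simp only [mem_djokovicSet, Set.mem_compl_iff]
  omega

lemma IsSquare.flip (h : IsSquare G u v x y) : IsSquare G x y u v :=
  let ⟨huv, hxy, hux, hvy, huy, hvx⟩ := h
  ⟨hxy, huv, hux.symm, hvy.symm, hvx.symm, huy.symm⟩

lemma IsSquare.swap (h : IsSquare G u v x y) : IsSquare G v u y x :=
  let ⟨huv, hxy, hux, hvy, huy, hvx⟩ := h
  ⟨huv.symm, hxy.symm, hvy, hux, hvx, huy⟩

lemma IsSquare.transpose (h : IsSquare G u v x y) : IsSquare G u x v y :=
  let ⟨huv, hxy, hux, hvy, huy, hvx⟩ := h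
  ⟨hux, hvy, huv, hxy, huy, hvx.symm⟩

/-- Otherwise `u` and `y` would both be medians of `w`, `v`, `x`. -/
lemma MedianGraph.djokovicSet_eq_of_isSquare (hmed : MedianGraph G) (h : IsSquare G u v x y) :
    djokovicSet G u v = djokovicSet G x y := by
  suffices key : ∀ {u v x y}, IsSquare G u v x y → djokovicSet G u v ⊆ djokovicSet G x y from
    (key h).antisymm (key h.flip)
  intro u v x y h w hw
  by_contra hw'
  rw [mem_djokovicSet] at hw hw'
  obtain ⟨huv, hxy, hux, hvy, huy, hvx⟩ := h
  have := hmed.dist_eq_or_of_adj huv w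
  have := hmed.dist_eq_or_of_adj hux w
  have := hmed.dist_eq_or_of_adj hvy w
  have := hmed.dist_eq_or_of_adj hxy w
  have hvx2 := hmed.dist_eq_two huv hux hvx
  have := dist_eq_one_iff_adj.2 huv
  have := dist_eq_one_iff_adj.2 huv.symm
  have := dist_eq_one_iff_adj.2 hux
  have := dist_eq_one_iff_adj.2 hux.symm
  have := dist_eq_one_iff_adj.2 hvy
  have := dist_eq_one_iff_adj.2 hvy.symm
  have := dist_eq_one_iff_adj.2 hxy
  have := dist_eq_one_iff_adj.2 hxy.symm
  have := G.dist_comm (u := w) (v := u)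
  have := G.dist_comm (u := w) (v := x)
  have := G.dist_comm (u := w) (v := y)
  refine huy (hmed.isMedian_unique (x := w) (y := v) (z := x) ?_ ?_) <;>
    simp only [IsMedian, interval, Set.mem_ofPred_eq] <;> omega

lemma Theta0.symm {e f : Sym2 V} (h : Theta0 G e f) : Theta0 G f e :=
  let ⟨u, v, x, y, hsq, he, hf⟩ := h
  ⟨x, y, u, v, hsq.flip, hf, he⟩

lemma Theta.symm {e f : Sym2 V} (h : Theta G e f) : Theta G f e :=
  ⟨h.2.1, h.1, Relation.ReflTransGen.mono (fun _ _ => Theta0.symm) f e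
    (Relation.ReflTransGen.swap f e h.2.2)⟩

lemma Theta.trans {e f g : Sym2 V} (h : Theta G e f) (h' : Theta G f g) : Theta G e g :=
  ⟨h.1, h'.2.1, h.2.2.trans h'.2.2⟩

lemma Theta.refl {e : Sym2 V} (he : e ∈ G.edgeSet) : Theta G e e :=
  ⟨he, he, .refl⟩

lemma IsSquare.theta (h : IsSquare G u v x y) : Theta G s(u, v) s(x, y) :=
  ⟨h.1, h.2.1, .single ⟨u, v, x, y, h, rfl, rfl⟩⟩

lemma MedianGraph.djokovicSet_eq_of_theta (hmed : MedianGraph G)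
    (h : Theta G s(a, b) s(x, y)) :
    djokovicSet G x y = djokovicSet G a b ∨ djokovicSet G x y = djokovicSet G b a := by
  suffices key : ∀ f, Relation.ReflTransGen (Theta0 G) s(a, b) f → ∀ x y, f = s(x, y) →
      djokovicSet G x y = djokovicSet G a b ∨ djokovicSet G x y = djokovicSet G b a from
    key _ h.2.2 x y rfl
  intro f hf
  induction hf with
  | refl =>
    intro x y hxy
    rcases Sym2.eq_iff.1 hxy with ⟨rfl, rfl⟩ | ⟨rfl, rfl⟩
    exacts [.inl rfl, .inr rfl]
  | tail _ hstep ih =>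
    obtain ⟨p, q, r, s, hsq, rfl, rfl⟩ := hstep
    intro x y hxy
    rcases Sym2.eq_iff.1 hxy with ⟨rfl, rfl⟩ | ⟨rfl, rfl⟩
    · rw [← hmed.djokovicSet_eq_of_isSquare hsq]
      exact ih p q rfl
    · rw [← hmed.djokovicSet_eq_of_isSquare hsq.swap]
      exact ih q p Sym2.eq_swap

/-- Induction on `d(x, a)`: a square `y x y' m` built towards `a` moves the edge closer. -/
lemma MedianGraph.theta_of_mem_djokovicSet (hmed : MedianGraph G) (hab : G.Adj a b)
    (hxy : G.Adj x y) (hx : x ∈ djokovicSet G a b) (hy : y ∈ djokovicSet G b a) :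
    Theta G s(a, b) s(x, y) := by
  obtain ⟨n, hn⟩ : ∃ n, G.dist x a = n := ⟨_, rfl⟩
  induction n using Nat.strong_induction_on generalizing x y with
  | _ n ih =>
  rw [mem_djokovicSet] at hx hy
  have := hmed.dist_eq_or_of_adj hab x
  have := hmed.dist_eq_or_of_adj hab y
  have := hmed.dist_eq_or_of_adj hxy a
  have := hmed.dist_eq_or_of_adj hxy b
  have := G.dist_comm (u := a) (v := x)
  have := G.dist_comm (u := a) (v := y)
  have := G.dist_comm (u := b) (v := x)
  have := G.dist_comm (u := b) (v := y)
  have hya : G.dist y a = n + 1 := by omega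
  have hyb : G.dist y b = n := by omega
  rcases Nat.eq_zero_or_pos n with rfl | hpos
  · obtain rfl := hmed.1.dist_eq_zero_iff.1 hn
    obtain rfl := hmed.1.dist_eq_zero_iff.1 hyb
    exact Theta.refl hxy
  obtain ⟨y', hyy', hy'b⟩ := hmed.1.exists_adj_dist_succ (x := y) (y := b)
    (fun h => by subst h; simp at hyb; omega)
  have := hmed.dist_eq_or_of_adj hyy' a
  have := hmed.dist_eq_or_of_adj hab y'
  have := G.dist_comm (u := a) (v := y')
  have hy'a : G.dist y' a = n := by omega
  have hxy' : x ≠ y' := by rintro rfl; omega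
  obtain ⟨m, hsq, hm⟩ := hmed.exists_isSquare (w := a) hxy.symm hyy' hxy' (by omega) (by omega)
  have hθ := hsq.theta
  obtain ⟨-, hy'm, -, hxm, -⟩ := hsq
  have := G.dist_comm (u := a) (v := m)
  have := G.dist_comm (u := b) (v := m)
  have := hmed.dist_eq_or_of_adj hxm b
  have hprev : Theta G s(a, b) s(m, y') :=
    ih (n - 1) (by omega) hy'm.symm (by rw [mem_djokovicSet]; omega)
      (by rw [mem_djokovicSet]; omega) (by omega)
  rw [Sym2.eq_swap (a := m)] at hprev
  rw [Sym2.eq_swap (a := x)]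
  exact hprev.trans hθ.symm

end Djokovic

section Halfspace

variable {C C' : Set (Sym2 V)}

lemma left_mem_djokovicSet (hab : G.Adj a b) : a ∈ djokovicSet G a b := by
  simp [mem_djokovicSet, dist_eq_one_iff_adj.2 hab]

lemma right_notMem_djokovicSet : b ∉ djokovicSet G a b := by
  simp [mem_djokovicSet]

lemma MedianGraph.theta_iff (hmed : MedianGraph G) (hab : G.Adj a b) (hxy : G.Adj x y) :
    Theta G s(a, b) s(x, y) ↔ ¬(x ∈ djokovicSet G a b ↔ y ∈ djokovicSet G a b) := by
  have hx := left_mem_djokovicSet hxy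
  have hy : y ∉ djokovicSet G x y := right_notMem_djokovicSet
  constructor
  · intro h
    rcases hmed.djokovicSet_eq_of_theta h with hW | hW
    · rw [hW] at hx hy
      tauto
    · rw [hW, hmed.djokovicSet_swap hab, Set.mem_compl_iff] at hx hy
      tauto
  · intro h
    by_cases hxW : x ∈ djokovicSet G a b
    · refine hmed.theta_of_mem_djokovicSet hab hxy hxW ?_
      rw [hmed.djokovicSet_swap hab]
      exact fun hyW => h (iff_of_true hxW hyW)
    · rw [Sym2.eq_swap (a := x)]
      refine hmed.theta_of_mem_djokovicSet hab hxy.symm (by tauto) ?_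
      rw [hmed.djokovicSet_swap hab]
      exact hxW

lemma MedianGraph.separates_iff (hmed : MedianGraph G) (hab : G.Adj a b) (x y : V) :
    Separates G {f | Theta G s(a, b) f} x y ↔
      ¬(x ∈ djokovicSet G a b ↔ y ∈ djokovicSet G a b) := by
  rw [Separates, not_iff_not]
  constructor
  · rintro ⟨p⟩
    induction p with
    | nil => rfl
    | cons hadj _ ih =>
      rw [deleteEdges_adj] at hadj
      exact (not_not.1 (mt (hmed.theta_iff hab hadj.1).2 hadj.2)).trans ih
  · intro h
    obtain ⟨n, hn⟩ : ∃ n, G.dist x y = n := ⟨_, rfl⟩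
    induction n using Nat.strong_induction_on generalizing x with
    | _ n ih =>
    by_cases hxy : x = y
    · exact hxy ▸ .rfl
    obtain ⟨z, hxz, hz⟩ := hmed.1.exists_adj_dist_succ hxy
    have hxz' : ¬ Theta G s(a, b) s(x, z) := by
      intro hθ
      -- `x` and `y` lie on opposite sides of `W_{xz}`, which is `W_{ab}` or its complement
      have hyW : y ∉ djokovicSet G x z := by
        rw [mem_djokovicSet, G.dist_comm (u := y), G.dist_comm (u := y)]
        omega
      have hxW := left_mem_djokovicSet hxz
      rcases hmed.djokovicSet_eq_of_theta hθ with hW | hW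
      · rw [hW] at hyW hxW
        tauto
      · rw [hW, hmed.djokovicSet_swap hab] at hyW hxW
        simp_all
    have hsame := not_not.1 (mt (hmed.theta_iff hab hxz).2 hxz')
    exact (Adj.reachable (deleteEdges_adj.2 ⟨hxz, hxz'⟩)).trans
      (ih (G.dist z y) (by omega) z (hsame.symm.trans h) rfl)

lemma thetaClass_setOf_theta (hab : G.Adj a b) : ThetaClass G {f | Theta G s(a, b) f} :=
  ⟨_, hab, rfl⟩

lemma ThetaClass.adj_of_mem (hC : ThetaClass G C) (h : s(x, y) ∈ C) : G.Adj x y := by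
  obtain ⟨e, -, rfl⟩ := hC
  exact h.2.1

lemma ThetaClass.mem_of_theta (hC : ThetaClass G C) {e f : Sym2 V} (he : e ∈ C)
    (hθ : Theta G e f) : f ∈ C := by
  obtain ⟨e₀, -, rfl⟩ := hC
  exact he.trans hθ

lemma ThetaClass.mem_of_isSquare (hC : ThetaClass G C) (h : s(u, v) ∈ C)
    (hsq : IsSquare G u v x y) : s(x, y) ∈ C :=
  hC.mem_of_theta h hsq.theta

lemma ThetaClass.eq_setOf_theta (hC : ThetaClass G C) (h : s(x, y) ∈ C) :
    C = {f | Theta G s(x, y) f} := by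
  obtain ⟨e, -, rfl⟩ := hC
  ext f
  exact ⟨fun hf => h.symm.trans hf, fun hf => h.trans hf⟩

lemma ThetaClass.eq_of_mem (hC : ThetaClass G C) (hC' : ThetaClass G C') {f : Sym2 V}
    (h : f ∈ C) (h' : f ∈ C') : C = C' := by
  induction f using Sym2.ind with
  | _ x y => rw [hC.eq_setOf_theta h, hC'.eq_setOf_theta h']

lemma Separates.symm (h : Separates G C x y) : Separates G C y x :=
  fun h' => h h'.symm

lemma not_separates_self : ¬ Separates G C x x :=
  fun h => h .rfl

lemma MedianGraph.exists_separates_iff (hmed : MedianGraph G) (hC : ThetaClass G C) :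
    ∃ P : V → Prop, ∀ x y, Separates G C x y ↔ ¬(P x ↔ P y) := by
  obtain ⟨e, he, rfl⟩ := hC
  induction e using Sym2.ind with
  | _ a b => exact ⟨(· ∈ djokovicSet G a b), hmed.separates_iff he⟩

lemma MedianGraph.separates_iff_xor (hmed : MedianGraph G) (hC : ThetaClass G C) (x y z : V) :
    Separates G C x z ↔ ¬(Separates G C x y ↔ Separates G C y z) := by
  obtain ⟨P, hP⟩ := hmed.exists_separates_iff hC
  simp only [hP]
  tauto

lemma MedianGraph.separates_iff_mem (hmed : MedianGraph G) (hC : ThetaClass G C)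
    (hxy : G.Adj x y) : Separates G C x y ↔ s(x, y) ∈ C := by
  obtain ⟨e, he, rfl⟩ := hC
  induction e using Sym2.ind with
  | _ a b => exact (hmed.separates_iff he x y).trans (hmed.theta_iff he hxy).symm

lemma MedianGraph.dist_lt_iff_not_separates (hmed : MedianGraph G) (hC : ThetaClass G C)
    (h : s(x, a) ∈ C) (w : V) : G.dist w x < G.dist w a ↔ ¬ Separates G C w x := by
  have hxa := hC.adj_of_mem h
  rw [hC.eq_setOf_theta h, hmed.separates_iff hxa, ← mem_djokovicSet]
  have := left_mem_djokovicSet hxa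
  tauto

lemma MedianGraph.dist_lt_of_separates (hmed : MedianGraph G) (hC : ThetaClass G C)
    (h : s(x, a) ∈ C) (hw : Separates G C w x) : G.dist w a < G.dist w x := by
  have := (hmed.dist_lt_iff_not_separates hC h w).not.2 (not_not.2 hw)
  have := hmed.dist_ne_of_adj (hC.adj_of_mem h) w
  omega

lemma MedianGraph.separates_of_mem (hmed : MedianGraph G) (hC : ThetaClass G C)
    (h : s(x, y) ∈ C) : Separates G C x y :=
  (hmed.separates_iff_mem hC (hC.adj_of_mem h)).2 h

lemma MedianGraph.not_separates_of_mem (hmed : MedianGraph G) (hC : ThetaClass G C)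
    (hC' : ThetaClass G C') (hne : C ≠ C') (h : s(x, y) ∈ C') : ¬ Separates G C x y :=
  fun hs => hne (hC.eq_of_mem hC' ((hmed.separates_iff_mem hC (hC'.adj_of_mem h)).1 hs) h)

lemma MedianGraph.signature_eq_singleton (hmed : MedianGraph G) (hxy : G.Adj x y) :
    signature G x y = {{f | Theta G s(x, y) f}} := by
  ext C
  refine ⟨fun ⟨hC, hsep⟩ => hC.eq_setOf_theta ((hmed.separates_iff_mem hC hxy).1 hsep), ?_⟩
  rintro rfl
  have hC := thetaClass_setOf_theta hxy
  exact ⟨hC, hmed.separates_of_mem hC (Theta.refl hxy)⟩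

end Halfspace

section Signature

lemma MedianGraph.signature_eq_symmDiff (hmed : MedianGraph G) (x y z : V) :
    signature G x z = symmDiff (signature G x y) (signature G y z) := by
  ext C
  simp only [signature, Set.mem_symmDiff, Set.mem_ofPred_eq]
  by_cases hC : ThetaClass G C
  · rw [hmed.separates_iff_xor hC x y z]
    tauto
  · tauto

lemma MedianGraph.encard_signature (hmed : MedianGraph G) (x y : V) :
    (signature G x y).encard = G.dist x y := by
  obtain ⟨n, hn⟩ : ∃ n, G.dist x y = n := ⟨_, rfl⟩
  induction n generalizing x with
  | zero =>
    obtain rfl := hmed.1.dist_eq_zero_iff.1 hn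
    simp [signature, not_separates_self]
  | succ n ih =>
    obtain ⟨z, hxz, hz⟩ := hmed.1.exists_adj_dist_succ (x := x) (y := y)
      (by rintro rfl; simp at hn)
    have hC₀ := thetaClass_setOf_theta hxz
    have hmem : s(z, x) ∈ {f | Theta G s(x, z) f} := by
      rw [Set.mem_ofPred_eq, Sym2.eq_swap (a := z)]
      exact Theta.refl hxz
    have hzy : {f | Theta G s(x, z) f} ∉ signature G z y := fun h =>
      (hmed.dist_lt_iff_not_separates hC₀ hmem y).1
        (by rw [G.dist_comm (u := y), G.dist_comm (u := y)]; omega) h.2.symm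
    rw [hmed.signature_eq_symmDiff x z y, hmed.signature_eq_singleton hxz,
      (Set.disjoint_singleton_left.2 hzy).symmDiff_eq_sup]
    simp only [Set.sup_eq_union]
    rw [Set.singleton_union, Set.encard_insert_of_notMem hzy, ih z (by omega), ← hz]
    push_cast
    rfl

lemma MedianGraph.finite_signature (hmed : MedianGraph G) (x y : V) :
    (signature G x y).Finite :=
  Set.finite_of_encard_eq_coe (hmed.encard_signature x y)

lemma MedianGraph.ncard_signature (hmed : MedianGraph G) (x y : V) :
    (signature G x y).ncard = G.dist x y := by
  rw [Set.ncard_def, hmed.encard_signature, ENat.toNat_natCast]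

lemma MedianGraph.mem_interval_iff_disjoint (hmed : MedianGraph G) :
    z ∈ interval G x y ↔ Disjoint (signature G x z) (signature G z y) := by
  have hA := hmed.finite_signature x z
  have hB := hmed.finite_signature z y
  simp only [interval, Set.mem_ofPred_eq]
  rw [← hmed.ncard_signature x z, ← hmed.ncard_signature z y, ← hmed.ncard_signature x y,
    hmed.signature_eq_symmDiff x z y]
  constructor
  · intro h
    have hle := Set.ncard_le_ncard symmDiff_le_sup (hA.union hB)
    have := Set.ncard_union_add_ncard_inter _ _ hA hB
    rw [Set.disjoint_iff_inter_eq_empty, ← Set.ncard_eq_zero (hA.inter_of_left _)]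
    simp only [Set.sup_eq_union] at hle
    omega
  · intro h
    rw [h.symmDiff_eq_sup]
    exact (Set.ncard_union_eq h hA hB).symm

lemma MedianGraph.mem_interval_iff_signature_subset (hmed : MedianGraph G) :
    z ∈ interval G x y ↔ signature G x z ⊆ signature G x y := by
  rw [hmed.mem_interval_iff_disjoint, Set.disjoint_left]
  constructor
  · intro h C hC
    exact ⟨hC.1, (hmed.separates_iff_xor hC.1 x z y).2 fun hiff => h hC ⟨hC.1, hiff.1 hC.2⟩⟩
  · intro h C hxz hzy
    exact (hmed.separates_iff_xor hxz.1 x z y).1 (h hxz).2 (iff_of_true hxz.2 hzy.2)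

lemma mem_interval_iff_of_mem_interval (hconn : G.Connected) (h : y ∈ interval G x z) :
    z ∈ interval G x v ↔ y ∈ interval G x v ∧ z ∈ interval G y v := by
  simp only [interval, Set.mem_ofPred_eq] at h ⊢
  have := hconn.dist_triangle (u := x) (v := y) (w := v)
  have := hconn.dist_triangle (u := y) (v := z) (w := v)
  omega

end Signature

section Orthogonal

variable {C C' : Set (Sym2 V)}

lemma Orthogonal.symm (h : Orthogonal G C C') : Orthogonal G C' C :=
  let ⟨u, v, x, y, hsq, h₁, h₂, h₃, h₄⟩ := h
  ⟨u, x, v, y, hsq.transpose, h₃, h₄, h₁, h₂⟩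

lemma Separates.left_or_right (h : Separates G C y z) (x : V) :
    Separates G C y x ∨ Separates G C x z := by
  by_contra hc
  simp only [Separates, not_or, not_not] at hc
  exact h (hc.1.trans hc.2)

lemma MedianGraph.separates_iff_of_not_separates (hmed : MedianGraph G) (hC : ThetaClass G C)
    (h : ¬ Separates G C y z) (x : V) : Separates G C y x ↔ Separates G C z x := by
  rw [hmed.separates_iff_xor hC y z x]
  tauto

/-- Some corner of a square witnessing `C ⊥ C'` lies in the two halfspaces not containing `x`. -/
lemma MedianGraph.exists_separates_separates (hmed : MedianGraph G) (hC : ThetaClass G C)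
    (hC' : ThetaClass G C') (hne : C ≠ C') (horth : Orthogonal G C C') (x : V) :
    ∃ w, Separates G C w x ∧ Separates G C' w x := by
  obtain ⟨p, q, r, s, -, hpq, -, hpr, hqs⟩ := horth
  by_cases hpx : Separates G C p x
  · have hrx := (hmed.separates_iff_of_not_separates hC
      (hmed.not_separates_of_mem hC hC' hne hpr) x).1 hpx
    rcases (hmed.separates_of_mem hC' hpr).left_or_right x with h | h
    exacts [⟨p, hpx, h⟩, ⟨r, hrx, h.symm⟩]
  · have hqx : Separates G C q x := by
      rw [hmed.separates_iff_xor hC q p x]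
      exact fun hiff => hpx (hiff.1 (hmed.separates_of_mem hC hpq).symm)
    have hsx := (hmed.separates_iff_of_not_separates hC
      (hmed.not_separates_of_mem hC hC' hne hqs) x).1 hqx
    rcases (hmed.separates_of_mem hC' hqs).left_or_right x with h | h
    exacts [⟨q, hqx, h⟩, ⟨s, hsx, h.symm⟩]

lemma MedianGraph.exists_adj_mem_of_orthogonal (hmed : MedianGraph G) (hC : ThetaClass G C)
    (hC' : ThetaClass G C') (hne : C ≠ C') (horth : Orthogonal G C C') (ha : s(x, a) ∈ C)
    (hb : s(x, b) ∈ C') : ∃ c, G.Adj b c ∧ s(b, c) ∈ C := by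
  obtain ⟨w, hw, hw'⟩ := hmed.exists_separates_separates hC hC' hne horth x
  have hab : a ≠ b := by
    rintro rfl
    exact hne (hC.eq_of_mem hC' ha hb)
  obtain ⟨m, hsq, -⟩ := hmed.exists_isSquare (hC.adj_of_mem ha) (hC'.adj_of_mem hb) hab
    (hmed.dist_lt_of_separates hC ha hw) (hmed.dist_lt_of_separates hC' hb hw')
  exact ⟨m, hsq.2.1, hC.mem_of_isSquare ha hsq⟩

lemma MedianGraph.orthogonal_of_separates (hmed : MedianGraph G) (hC : ThetaClass G C)
    (hC' : ThetaClass G C') (hne : C ≠ C') {w' : V} (hw : s(u, w) ∈ C) (hw' : s(u, w') ∈ C')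
    (hs : Separates G C u v) (hs' : Separates G C' u v) : Orthogonal G C C' := by
  have hww' : w ≠ w' := by
    rintro rfl
    exact hne (hC.eq_of_mem hC' hw hw')
  obtain ⟨m, hsq, -⟩ := hmed.exists_isSquare (w := v) (hC.adj_of_mem hw) (hC'.adj_of_mem hw')
    hww' (hmed.dist_lt_of_separates hC hw hs.symm) (hmed.dist_lt_of_separates hC' hw' hs'.symm)
  exact ⟨u, w, w', m, hsq, hw, hC.mem_of_isSquare hw hsq, hw',
    hC'.mem_of_isSquare hw' hsq.transpose⟩

lemma isPOF_union_singleton_iff {L : Set (Set (Sym2 V))} (hL : IsPOF G L) (hC : ThetaClass G C)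
    (hCL : C ∉ L) : IsPOF G (L ∪ {C}) ↔ ∀ C' ∈ L, Orthogonal G C C' := by
  constructor
  · intro h C' hC'
    exact h.2 C (.inr rfl) C' (.inl hC') fun e => hCL (e ▸ hC')
  · intro h
    refine ⟨fun D hD => hD.elim (hL.1 D) fun e => e ▸ hC, ?_⟩
    rintro D (hD | rfl) E (hE | rfl) hDE
    · exact hL.2 D hD E hE hDE
    · exact (h D hD).symm
    · exact h E hE
    · exact absurd rfl hDE

end Orthogonal

section Cube

variable {k : ℕ} {S : Set V} {C : Set (Sym2 V)}

lemma cubeGraph_adj_iff {A B : Finset (Fin k)} :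
    (cubeGraph k).Adj A B ↔ ∃ i, B = symmDiff A {i} := by
  change (symmDiff A B).card = 1 ↔ _
  rw [Finset.card_eq_one]
  refine exists_congr fun i => ⟨fun h => ?_, fun h => ?_⟩
  · rw [← h, symmDiff_symmDiff_cancel_left]
  · rw [h, symmDiff_symmDiff_cancel_left]

lemma cubeGraph_connected : (cubeGraph k).Connected := by
  have h : ∀ A, (cubeGraph k).Reachable ∅ A := by
    intro A
    induction A using Finset.induction_on with
    | empty => rfl
    | insert i A hi ih =>
      refine ih.trans (Adj.reachable (cubeGraph_adj_iff.2 ⟨i, ?_⟩))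
      ext j
      by_cases hj : j = i <;> simp [Finset.mem_symmDiff, hj, hi]
  exact (connected_iff _).2 ⟨fun A B => (h A).symm.trans (h B), ⟨∅⟩⟩

lemma theta_of_cube (φ : G.induce S ≃g cubeGraph k) (i : Fin k) (A B : Finset (Fin k)) :
    Theta G s((φ.symm A : V), φ.symm (symmDiff A {i}))
      s((φ.symm B : V), φ.symm (symmDiff B {i})) := by
  have hadj : ∀ A j, G.Adj (φ.symm A) (φ.symm (symmDiff A {j})) := fun A j =>
    φ.symm.map_adj_iff.2 (cubeGraph_adj_iff.2 ⟨j, rfl⟩)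
  have hinj : Function.Injective fun A => (φ.symm A : V) :=
    Subtype.coe_injective.comp φ.symm.injective
  have hstep : ∀ A j, Theta G s((φ.symm A : V), φ.symm (symmDiff A {i}))
      s((φ.symm (symmDiff A {j}) : V), φ.symm (symmDiff (symmDiff A {j}) {i})) := by
    intro A j
    by_cases hji : j = i
    · subst hji
      rw [symmDiff_symmDiff_cancel_right, Sym2.eq_swap]
      exact Theta.refl (hadj A j).symm
    refine IsSquare.theta ⟨hadj A i, hadj _ i, hadj A j, ?_, fun h => hji ?_, fun h => hji ?_⟩
    · rw [symmDiff_right_comm]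
      exact hadj _ j
    · rw [symmDiff_assoc] at h
      exact Finset.singleton_injective (symmDiff_eq_bot.1 (symmDiff_eq_left.1 (hinj h).symm))
    · exact (Finset.singleton_injective (symmDiff_right_inj.1 (hinj h))).symm
  have hAB : Relation.ReflTransGen (cubeGraph k).Adj A B :=
    (reachable_iff_reflTransGen A B).1 (cubeGraph_connected.preconnected A B)
  induction hAB with
  | refl => exact Theta.refl (hadj A i)
  | tail _ hBB' ih =>
    obtain ⟨j, rfl⟩ := cubeGraph_adj_iff.1 hBB'
    exact ih.trans (hstep _ j)

lemma IsInducedCube.exists_adj_mem (hS : IsInducedCube G S) (hC : C ∈ cubeClasses G S)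
    (hx : x ∈ S) : ∃ y ∈ S, G.Adj x y ∧ s(x, y) ∈ C := by
  obtain ⟨k, ⟨φ⟩⟩ := hS
  obtain ⟨hC, a, ha, b, hb, hab, habC⟩ := hC
  obtain ⟨i, hi⟩ := cubeGraph_adj_iff.1
    (φ.map_adj_iff.2 (show (G.induce S).Adj ⟨a, ha⟩ ⟨b, hb⟩ from hab))
  have hθ := theta_of_cube φ i (φ ⟨a, ha⟩) (φ ⟨x, hx⟩)
  rw [← hi] at hθ
  simp only [RelIso.symm_apply_apply] at hθ
  exact ⟨_, (φ.symm _).2, hθ.2.1, hC.mem_of_theta habC hθ⟩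

lemma IsInducedCube.imp_of_adj (hS : IsInducedCube G S) {Q : V → Prop}
    (hQ : ∀ x ∈ S, ∀ y ∈ S, G.Adj x y → Q x → Q y) (hx : x ∈ S) (hy : y ∈ S) :
    Q x → Q y := by
  obtain ⟨k, ⟨φ⟩⟩ := hS
  obtain ⟨p⟩ := (φ.connected_iff.2 cubeGraph_connected).preconnected ⟨x, hx⟩ ⟨y, hy⟩
  suffices key : ∀ a b : S, (G.induce S).Walk a b → Q a → Q b from key _ _ p
  intro a b p
  induction p with
  | nil => exact id
  | cons hadj _ ih => exact ih ∘ hQ _ (Subtype.prop _) _ (Subtype.prop _) hadj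

lemma IsInducedCube.mem_cubeClasses_of_separates (hmed : MedianGraph G)
    (hS : IsInducedCube G S) (hC : ThetaClass G C) (hx : x ∈ S) (hy : y ∈ S)
    (h : Separates G C x y) : C ∈ cubeClasses G S := by
  by_contra hCS
  refine hS.imp_of_adj (Q := fun z => ¬ Separates G C x z) ?_ hx hy not_separates_self h
  intro z hz z' hz' hzz' hxz hxz'
  refine (hxz'.left_or_right z).elim hxz fun hzz'C => hCS ?_
  exact ⟨hC, z, hz, z', hz', hzz', (hmed.separates_iff_mem hC hzz').1 hzz'C⟩

lemma IsInducedCube.exists_adj_mem_of_orthogonal (hmed : MedianGraph G)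
    (hS : IsInducedCube G S) (hC : ThetaClass G C) (hCS : C ∉ cubeClasses G S)
    (horth : ∀ C' ∈ cubeClasses G S, Orthogonal G C C') (hx : x ∈ S) (hy : y ∈ S) :
    (∃ c, G.Adj x c ∧ s(x, c) ∈ C) → ∃ c, G.Adj y c ∧ s(y, c) ∈ C := by
  refine hS.imp_of_adj (Q := fun z => ∃ c, G.Adj z c ∧ s(z, c) ∈ C) ?_ hx hy
  rintro z hz z' hz' hzz' ⟨c, -, hc⟩
  have hC' : {f | Theta G s(z, z') f} ∈ cubeClasses G S :=
    ⟨thetaClass_setOf_theta hzz', z, hz, z', hz', hzz', Theta.refl hzz'⟩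
  exact hmed.exists_adj_mem_of_orthogonal hC hC'.1 (fun e => hCS (e ▸ hC')) (horth _ hC') hc
    (Theta.refl hzz')

end Cube

section Ladder

variable {S : Set V} {C : Set (Sym2 V)} {v₀ u' : V}

lemma IsBasis.not_separates (hmed : MedianGraph G) (hS : IsInducedCube G S)
    (hbasis : IsBasis G v₀ S u) (hC : C ∈ cubeClasses G S) : ¬ Separates G C v₀ u := by
  obtain ⟨y, hy, huy, huyC⟩ := hS.exists_adj_mem hC hbasis.1
  exact (hmed.dist_lt_iff_not_separates hC.1 huyC v₀).1 (hbasis.2 y hy huy)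

lemma IsAntiBasis.separates (hmed : MedianGraph G) (hS : IsInducedCube G S)
    (hanti : IsAntiBasis G v₀ S u) (hC : C ∈ cubeClasses G S) : Separates G C v₀ u := by
  obtain ⟨y, hy, huy, huyC⟩ := hS.exists_adj_mem hC hanti.1
  exact not_not.1 fun h =>
    lt_asymm (hanti.2 y hy huy) ((hmed.dist_lt_iff_not_separates hC.1 huyC v₀).2 h)

lemma signature_eq_cubeClasses (hmed : MedianGraph G) (hS : IsInducedCube G S)
    (hbasis : IsBasis G v₀ S u) (hanti : IsAntiBasis G v₀ S u') :
    signature G u u' = cubeClasses G S := by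
  ext C
  constructor
  · rintro ⟨hC, hsep⟩
    exact hS.mem_cubeClasses_of_separates hmed hC hbasis.1 hanti.1 hsep
  · intro hC
    exact ⟨hC.1, (hmed.separates_iff_of_not_separates hC.1 (hbasis.not_separates hmed hS hC) u').1
      (hanti.separates hmed hS hC)⟩

lemma IsInducedCube.mem_ladder_iff (hmed : MedianGraph G) (hS : IsInducedCube G S)
    (hC : ThetaClass G C) (hCS : C ∉ cubeClasses G S)
    (horth : ∀ C' ∈ cubeClasses G S, Orthogonal G C C') (hu : u ∈ S) (hu' : u' ∈ S) :
    C ∈ ladder G u v ↔ C ∈ ladder G u' v := by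
  have hsep : ¬ Separates G C u u' := fun h =>
    hCS (hS.mem_cubeClasses_of_separates hmed hC hu hu' h)
  simp only [ladder, signature, Set.mem_ofPred_eq, hmed.separates_iff_of_not_separates hC hsep v]
  exact and_congr_right' ⟨hS.exists_adj_mem_of_orthogonal hmed hC hCS horth hu hu',
    hS.exists_adj_mem_of_orthogonal hmed hC hCS horth hu' hu⟩

lemma ladder_eq_cubeClasses_iff (hmed : MedianGraph G) (hS : IsInducedCube G S) (hu : u ∈ S)
    (hu' : u' ∈ S) (hsig : signature G u u' = cubeClasses G S) (hL : IsPOF G (cubeClasses G S)) :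
    ladder G u v = cubeClasses G S ↔
      cubeClasses G S ⊆ signature G u v ∧
        ∀ C ∈ ladder G u' v, ¬ IsPOF G (cubeClasses G S ∪ {C}) := by
  have hedge : ∀ C ∈ cubeClasses G S, ∃ w, G.Adj u w ∧ s(u, w) ∈ C := fun C hC =>
    let ⟨w, _, huw, hC⟩ := hS.exists_adj_mem hC hu
    ⟨w, huw, hC⟩
  constructor
  · intro hlad
    have hsub : cubeClasses G S ⊆ signature G u v := hlad ▸ fun C hC => hC.1
    refine ⟨hsub, fun C hC hPOF => ?_⟩
    have hCS : C ∉ cubeClasses G S := fun hCS =>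
      (hmed.separates_iff_xor hCS.1 u u' v).1 (hsub hCS).2
        (iff_of_true (hsig ▸ hCS : C ∈ signature G u u').2 hC.1.2)
    have horth := (isPOF_union_singleton_iff hL hC.1.1 hCS).1 hPOF
    exact hCS (hlad ▸ (hS.mem_ladder_iff hmed hC.1.1 hCS horth hu hu').2 hC)
  · rintro ⟨hsub, hnot⟩
    refine Set.Subset.antisymm (fun C hC => ?_) fun C hC => ⟨hsub hC, hedge C hC⟩
    by_contra hCS
    obtain ⟨⟨hCθ, hCuv⟩, w, -, hw⟩ := hC
    have horth : ∀ C' ∈ cubeClasses G S, Orthogonal G C C' := fun C' hC' =>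
      let ⟨_, _, hw'⟩ := hedge C' hC'
      hmed.orthogonal_of_separates hCθ hC'.1 (fun e => hCS (e ▸ hC')) hw hw' hCuv (hsub hC').2
    have hC' : C ∈ ladder G u' v :=
      (hS.mem_ladder_iff hmed hCθ hCS horth hu hu').1 ⟨⟨hCθ, hCuv⟩, w, hCθ.adj_of_mem hw, hw⟩
    exact hnot C hC' ((isPOF_union_singleton_iff hL hCθ hCS).2 horth)

end Ladder

theorem pushing_label_general {V : Type*} (G : SimpleGraph V)
    (hmed : MedianGraph G) (v₀ u : V)
    (L : Set (Set (Sym2 V))) (hL : OutgoingPOF G v₀ u L)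
    (S : Set V) (hS : IsInducedCube G S) (hbasis : IsBasis G v₀ S u)
    (hclasses : cubeClasses G S = L)
    (uplus : V) (hanti : IsAntiBasis G v₀ S uplus)
    (v : V) :
    (u ∈ interval G v₀ v ∧ ladder G u v = L) ↔
      (uplus ∈ interval G v₀ v ∧
       ∀ C ∈ ladder G uplus v, ¬ IsPOF G (L ∪ {C})) := by
  subst hclasses
  have hsig := signature_eq_cubeClasses hmed hS hbasis hanti
  have hgeod : u ∈ interval G v₀ uplus := by
    rw [hmed.mem_interval_iff_disjoint, hsig, Set.disjoint_right]
    exact fun C hC h => hbasis.not_separates hmed hS hC h.2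
  rw [mem_interval_iff_of_mem_interval hmed.1 hgeod,
    hmed.mem_interval_iff_signature_subset (x := u), hsig,
    ladder_eq_cubeClasses_iff hmed hS hbasis.1 hanti.1 hsig hL.1, and_assoc]

/-- In a median graph with basepoint `v₀`, let `L` be a POF
outgoing from `u`, `Q` (with vertex set `S`) the induced hypercube with basis
`u` and Θ-classes `L`, and `u⁺` its anti-basis. A vertex `v ≠ u⁺` satisfies
`u ∈ I(v₀,v)` and `L_{u,v} = L` iff `u⁺ ∈ I(v₀,v)` and no class of
`L_{u⁺,v}` extends `L` to a POF. -/
theorem pushing_label {V : Type*} [Fintype V] (G : SimpleGraph V)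
    (hmed : MedianGraph G) (v₀ u : V)
    (L : Set (Set (Sym2 V))) (hL : OutgoingPOF G v₀ u L)
    (S : Set V) (hS : IsInducedCube G S) (hbasis : IsBasis G v₀ S u)
    (hclasses : cubeClasses G S = L)
    (uplus : V) (hanti : IsAntiBasis G v₀ S uplus)
    (v : V) (hv : v ≠ uplus) :
    (u ∈ interval G v₀ v ∧ ladder G u v = L) ↔
      (uplus ∈ interval G v₀ v ∧
       ∀ C ∈ ladder G uplus v, ¬ IsPOF G (L ∪ {C})) :=
  pushing_label_general G hmed v₀ u L hL S hS hbasis hclasses uplus hanti v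

end MedianPaper
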